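/- Let δ be a limit ordinal with cf(δ) > ℵ₁ and let η̄ = ⟨η_α : α < δ⟩ be <*-increasing in ωω. Then every subset of Q_η̄ of cardinality ℵ₁ is included in the union of countably many directed subsets of Q_η̄. -/

import Mathlib

/-- `f <* g` for `f g : ℕ → ℕ` : `{n : f n ≥ g n}` is finite. -/
def LtStar (f g : ℕ → ℕ) : Prop := {n | g n ≤ f n}.Finite

/-- `f <* ν` for `f : ℕ → ℕ`, `ν : ℕ → ω+1` : `{n : f n ≥ ν n}` is finite. -/
def LtStarT (f : ℕ → ℕ) (ν : ℕ → ℕ∞) : Prop := {n | ν n ≤ (f n : ℕ∞)}.Finite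

/-- A condition of the forcing `Q_η̄`: a triple `(ρ, α, g)` with `ρ ∈ ω^{<ω}`,
`α < δ`, `g ∈ F_η̄`, and `η_α(n) ≤ g(n)` for all `n ≥ lg ρ`. -/
structure QCond (δ : Ordinal) (η : Ordinal → ℕ → ℕ) where
  ρ : List ℕ
  α : Ordinal
  g : ℕ → ℕ∞
  hα : α < δ
  hg : ∀ β, β < δ → LtStarT (η β) g
  hbound : ∀ n, ρ.length ≤ n → (η α n : ℕ∞) ≤ g n

/-- The order of `Q_η̄`. -/
def QLE {δ : Ordinal} {η : Ordinal → ℕ → ℕ} (p q : QCond δ η) : Prop :=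
  p.ρ <+: q.ρ ∧ p.α ≤ q.α ∧ (∀ n, q.g n ≤ p.g n) ∧
    (∀ n, q.ρ.length ≤ n → η p.α n ≤ η q.α n) ∧
    (∀ n, p.ρ.length ≤ n → n < q.ρ.length →
      η p.α n ≤ q.ρ.getD n 0 ∧ (q.ρ.getD n 0 : ℕ∞) ≤ p.g n)

/-!
Since `|S| = ℵ₁ < cf δ`, some `β < δ` bounds all `α^p`, `p ∈ S`. For each such `p` we have
`η_{α^p} ≤ η_β ≤ g^p` from some `n ≥ lg ρ^p` on; extending `ρ^p` by `η_{α^p}` up to `n` gives a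
stem `w ∈ ω^{<ω}`. Conditions with the same stem `w` have the common upper bound
`(w, β, min g^p g^q)`, and there are only countably many stems.
-/

open Filter

universe u

lemma LtStar.eventually_lt {f g : ℕ → ℕ} (h : LtStar f g) : ∀ᶠ n in atTop, f n < g n := by
  rw [← Nat.cofinite_eq_atTop, eventually_cofinite]
  simp only [not_lt]
  exact h

lemma LtStarT.eventually_lt {f : ℕ → ℕ} {ν : ℕ → ℕ∞} (h : LtStarT f ν) :
    ∀ᶠ n in atTop, (f n : ℕ∞) < ν n := by
  rw [← Nat.cofinite_eq_atTop, eventually_cofinite]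
  simp only [not_lt]
  exact h

lemma LtStarT.inf {f : ℕ → ℕ} {ν μ : ℕ → ℕ∞} (hν : LtStarT f ν) (hμ : LtStarT f μ) :
    LtStarT f (ν ⊓ μ) :=
  (hν.union hμ).subset fun n (hn : ν n ⊓ μ n ≤ f n) => inf_le_iff.1 hn

namespace QCond

variable {δ : Ordinal.{u}} {η : Ordinal.{u} → ℕ → ℕ}

variable (η) in
def stemClass (β : Ordinal) (w : List ℕ) : Set (QCond δ η) :=
  {p | p.α ≤ β ∧ p.ρ <+: w ∧
    (∀ n, p.ρ.length ≤ n → n < w.length → w.getD n 0 = η p.α n) ∧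
    ∀ n, w.length ≤ n → η p.α n ≤ η β n ∧ (η β n : ℕ∞) ≤ p.g n}

lemma qle_of_mem_stemClass {β : Ordinal} {w : List ℕ} {p r : QCond δ η}
    (hp : p ∈ stemClass η β w) (hρ : r.ρ = w) (hα : r.α = β) (hg : ∀ n, r.g n ≤ p.g n) :
    QLE p r := by
  obtain ⟨hαβ, hprefix, hstem, htail⟩ := hp
  subst hρ hα
  refine ⟨hprefix, hαβ, hg, fun n hn => (htail n hn).1, fun n hn₁ hn₂ => ?_⟩
  rw [hstem n hn₁ hn₂]
  exact ⟨le_rfl, p.hbound n hn₁⟩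

theorem directedOn_stemClass {β : Ordinal} (hβ : β < δ) (w : List ℕ) :
    DirectedOn QLE (stemClass (δ := δ) η β w) := by
  intro p hp q hq
  let r : QCond δ η :=
    { ρ := w
      α := β
      g := p.g ⊓ q.g
      hα := hβ
      hg := fun γ hγ => (p.hg γ hγ).inf (q.hg γ hγ)
      hbound := fun n hn => le_inf (hp.2.2.2 n hn).2 (hq.2.2.2 n hn).2 }
  have hr : r ∈ stemClass η β w :=
    ⟨le_rfl, List.prefix_refl w, fun _ h₁ h₂ => absurd h₂ (not_lt.2 h₁),
      fun n hn => ⟨le_rfl, le_inf (hp.2.2.2 n hn).2 (hq.2.2.2 n hn).2⟩⟩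
  exact ⟨r, hr, qle_of_mem_stemClass hp rfl rfl fun _ => inf_le_left,
    qle_of_mem_stemClass hq rfl rfl fun _ => inf_le_right⟩

theorem exists_mem_stemClass (hinc : ∀ a b, a < b → b < δ → LtStar (η a) (η b))
    {β : Ordinal} (hβ : β < δ) {p : QCond δ η} (hp : p.α ≤ β) :
    ∃ w, p ∈ stemClass η β w := by
  have hη : ∀ᶠ n in atTop, η p.α n ≤ η β n := by
    rcases hp.lt_or_eq with hlt | rfl
    · exact (hinc _ _ hlt hβ).eventually_lt.mono fun _ => le_of_lt
    · exact .of_forall fun _ => le_rfl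
  obtain ⟨N, hN⟩ := eventually_atTop.1 ((eventually_ge_atTop p.ρ.length).and
    (hη.and ((p.hg β hβ).eventually_lt.mono fun _ => le_of_lt)))
  have hN₀ := (hN N le_rfl).1
  refine ⟨p.ρ ++ (List.range' p.ρ.length (N - p.ρ.length)).map (η p.α), hp,
    List.prefix_append _ _, fun m hm₁ hm₂ => ?_, fun m hm => (hN m ?_).2⟩
  · simp only [List.length_append, List.length_map, List.length_range'] at hm₂
    simp [List.getD_eq_getElem?_getD, List.getElem?_append_right hm₁,
      show m - p.ρ.length < N - p.ρ.length by omega, Nat.add_sub_cancel' hm₁]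
  · simp only [List.length_append, List.length_map, List.length_range'] at hm
    omega

theorem exists_forall_alpha_le {S : Set (QCond δ η)}
    (hS : Cardinal.mk S < Cardinal.lift.{u + 1} δ.cof) : ∃ β < δ, ∀ p ∈ S, p.α ≤ β := by
  refine ⟨⨆ p : S, (p : QCond δ η).α, ?_, fun p hp => ?_⟩
  · refine Ordinal.lift_iSup_lt_of_lt_cof ?_ fun p => (p : QCond δ η).hα
    rwa [Cardinal.lift_id'.{u, u + 1}, ← Ordinal.lift_cof]
  · exact le_ciSup (f := fun p : S => (p : QCond δ η).α)
      ⟨δ, by rintro _ ⟨q, rfl⟩; exact q.1.hα.le⟩ ⟨p, hp⟩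

theorem exists_directedOn_cover (hinc : ∀ a b, a < b → b < δ → LtStar (η a) (η b))
    {S : Set (QCond δ η)} (hS : Cardinal.mk S < Cardinal.lift.{u + 1} δ.cof) :
    ∃ D : ℕ → Set (QCond δ η), (∀ m, DirectedOn QLE (D m)) ∧ S ⊆ ⋃ m, D m := by
  obtain ⟨β, hβ, hSβ⟩ := exists_forall_alpha_le hS
  refine ⟨fun m => stemClass η β (Denumerable.ofNat (List ℕ) m),
    fun m => directedOn_stemClass hβ _, fun p hp => ?_⟩
  obtain ⟨w, hw⟩ := exists_mem_stemClass hinc hβ (hSβ p hp)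
  exact Set.mem_iUnion.2 ⟨Encodable.encode w, by rwa [Denumerable.ofNat_encode]⟩

end QCond

theorem QCond_sigma_directed_cover_general (δ : Ordinal)
    (hcof : Cardinal.aleph 1 < δ.cof) (η : Ordinal → ℕ → ℕ)
    (hinc : ∀ a b, a < b → b < δ → LtStar (η a) (η b)) :
    ∀ S : Set (QCond δ η), Cardinal.mk S = Cardinal.aleph 1 →
      ∃ D : ℕ → Set (QCond δ η),
        (∀ m, ∀ p ∈ D m, ∀ q ∈ D m, ∃ r ∈ D m, QLE p r ∧ QLE q r) ∧
        S ⊆ ⋃ m, D m := by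
  intro S hS
  exact QCond.exists_directedOn_cover hinc <| by
    simpa [hS, Cardinal.lift_aleph] using Cardinal.lift_strictMono hcof

/-- If `cf(δ) > ℵ₁` then every set of `ℵ₁` many conditions of `Q_η̄` is included
in the union of countably many directed subsets of `Q_η̄`. -/
theorem QCond_sigma_directed_cover (δ : Ordinal) (hδ : Order.IsSuccLimit δ)
    (hcof : Cardinal.aleph 1 < δ.cof) (η : Ordinal → ℕ → ℕ)
    (hinc : ∀ a b, a < b → b < δ → LtStar (η a) (η b)) :
    ∀ S : Set (QCond δ η), Cardinal.mk S = Cardinal.aleph 1 →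
      ∃ D : ℕ → Set (QCond δ η),
        (∀ m, ∀ p ∈ D m, ∀ q ∈ D m, ∃ r ∈ D m, QLE p r ∧ QLE q r) ∧
        S ⊆ ⋃ m, D m :=
  QCond_sigma_directed_cover_general δ hcof η hinc
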